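/- arXiv:2001.10212 — 2 statements merged into one kernel-verified Lean document; each statement's English description precedes it below -/
import Mathlib

section
/- Fix $0 < R < 1$ and a positive integer $m$ with $0 < s(m) < 1$, where $s(m) = \frac{m(m+1)-m(m-1)R^{-2m}}{m(m+1)+m(m-1)R^{-2m}}$. Define $\beta_k(\lambda) = \frac{(k+1)(s(m)+\lambda-1)k+(k+ks(m)+k\lambda)(k-1)R^{-2k}}{2(k+ks(m)+k\lambda)R^{-2k}+2k(1-s(m)-\lambda)}$. Then for every positive integer $k \neq m$ with denominator nonvanishing at $\lambda = 0$, one has $\beta_k(0) \neq 0$. -/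
/-- With `N = 2`, `0 < s(m) < 1` and `β_k` as in the paper, for every positive
integer `k ≠ m` with nonvanishing denominator at `λ = 0`, one has `β_k(0) ≠ 0`. -/
theorem stmt_6 (R : ℝ) (hR0 : 0 < R) (hR1 : R < 1) (m : ℕ) (hm : 1 ≤ m)
    (s0 : ℝ)
    (hs0 : s0 = ((m : ℝ) * (m + 1) - (m : ℝ) * (m - 1) * R ^ (-(2 : ℤ) * m)) /
      ((m : ℝ) * (m + 1) + (m : ℝ) * (m - 1) * R ^ (-(2 : ℤ) * m)))
    (hs0pos : 0 < s0) (hs0lt : s0 < 1)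
    (β : ℕ → ℝ → ℝ)
    (hβ : ∀ (k : ℕ) (lam : ℝ), 1 ≤ k → β k lam =
      (((k : ℝ) + 1) * (s0 + lam - 1) * k +
        ((k : ℝ) + k * s0 + k * lam) * ((k : ℝ) - 1) * R ^ (-(2 : ℤ) * k)) /
      (2 * ((k : ℝ) + k * s0 + k * lam) * R ^ (-(2 : ℤ) * k) + 2 * k * (1 - s0 - lam)))
    (k : ℕ) (hk : 1 ≤ k) (hkm : k ≠ m)
    (hden : 2 * ((k : ℝ) + k * s0) * R ^ (-(2 : ℤ) * k) + 2 * k * (1 - s0) ≠ 0) :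
    β k 0 ≠ 0 := by
  rw [hβ k 0 hk]
  have hrk : (0:ℝ) < R ^ (-(2 : ℤ) * k) := zpow_pos hR0 _
  have hrm : (0:ℝ) < R ^ (-(2 : ℤ) * m) := zpow_pos hR0 _
  have hk1 : (1:ℝ) ≤ (k:ℝ) := by exact_mod_cast hk
  have hm1 : (1:ℝ) ≤ (m:ℝ) := by exact_mod_cast hm
  have hden' : 2 * ((k : ℝ) + k * s0 + k * 0) * R ^ (-(2 : ℤ) * k)
      + 2 * k * (1 - s0 - 0) ≠ 0 := by
    simpa using hden
  apply div_ne_zero _ hden'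
  intro hnum
  -- s0 * (A + B) = A - B for the m-quantities
  have hABpos : (0:ℝ) < (m : ℝ) * (m + 1) + (m : ℝ) * (m - 1) * R ^ (-(2 : ℤ) * m) := by
    have : (0:ℝ) ≤ (m : ℝ) * (m - 1) * R ^ (-(2 : ℤ) * m) :=
      mul_nonneg (mul_nonneg (by linarith) (by linarith)) hrm.le
    nlinarith
  have hAB : s0 * ((m : ℝ) * (m + 1) + (m : ℝ) * (m - 1) * R ^ (-(2 : ℤ) * m))
      = (m : ℝ) * (m + 1) - (m : ℝ) * (m - 1) * R ^ (-(2 : ℤ) * m) := by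
    rw [hs0, div_mul_cancel₀]
    exact ne_of_gt hABpos
  -- s0 * (a + b) = a - b for the k-quantities
  have hab : s0 * ((k : ℝ) * (k + 1) + (k : ℝ) * (k - 1) * R ^ (-(2 : ℤ) * k))
      = (k : ℝ) * (k + 1) - (k : ℝ) * (k - 1) * R ^ (-(2 : ℤ) * k) := by
    linear_combination hnum
  -- cross identity: A * b = a * B
  have hmk : (0:ℝ) < (m:ℝ) * k := by nlinarith
  have h3 : ((m:ℝ) * k) * ((((m:ℝ)+1) * ((k:ℝ)-1)) * R ^ (-(2 : ℤ) * k))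
      = ((m:ℝ) * k) * ((((k:ℝ)+1) * ((m:ℝ)-1)) * R ^ (-(2 : ℤ) * m)) := by
    linear_combination (((m : ℝ) * (m + 1) + (m : ℝ) * (m - 1) * R ^ (-(2 : ℤ) * m)) / 2) * hab
      - (((k : ℝ) * (k + 1) + (k : ℝ) * (k - 1) * R ^ (-(2 : ℤ) * k)) / 2) * hAB
  have h2 := mul_left_cancel₀ (ne_of_gt hmk) h3
  have hmono : ∀ i j : ℕ, i < j → R ^ (-(2 : ℤ) * i) < R ^ (-(2 : ℤ) * j) := by
    intro i j hij
    exact zpow_lt_zpow_right_of_lt_one₀ hR0 hR1 (by omega)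
  rcases lt_or_gt_of_ne hkm with h | h
  · have hr := hmono k m h
    have hkmR : (k:ℝ) < m := by exact_mod_cast h
    have hc1 : (0:ℝ) ≤ ((m:ℝ)+1) * ((k:ℝ)-1) := by nlinarith
    have hc12 : ((m:ℝ)+1) * ((k:ℝ)-1) < ((k:ℝ)+1) * ((m:ℝ)-1) := by nlinarith
    linarith [h2, mul_nonneg hc1 (by linarith : (0:ℝ) ≤ R ^ (-(2 : ℤ) * m) - R ^ (-(2 : ℤ) * k)),
      mul_pos (by linarith : (0:ℝ) < ((k:ℝ)+1) * ((m:ℝ)-1) - ((m:ℝ)+1) * ((k:ℝ)-1)) hrm]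
  · have hr := hmono m k h
    have hkmR : (m:ℝ) < k := by exact_mod_cast h
    have hc1 : (0:ℝ) ≤ ((k:ℝ)+1) * ((m:ℝ)-1) := by nlinarith
    have hc12 : ((k:ℝ)+1) * ((m:ℝ)-1) < ((m:ℝ)+1) * ((k:ℝ)-1) := by nlinarith
    linarith [h2, mul_nonneg hc1 (by linarith : (0:ℝ) ≤ R ^ (-(2 : ℤ) * k) - R ^ (-(2 : ℤ) * m)),
      mul_pos (by linarith : (0:ℝ) < ((m:ℝ)+1) * ((k:ℝ)-1) - ((k:ℝ)+1) * ((m:ℝ)-1)) hrk]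
end

section
/- For $N = 2$ and fixed $0 < R < 1$, the map $k \mapsto s(k) = \frac{k(k+1)-k(k-1)R^{-2k}}{k(k+1)+k(k-1)R^{-2k}}$ is strictly decreasing on positive integers $k \geq 1$; in particular it is injective. -/
/-- For `N = 2` and fixed `0 < R < 1`, the map `k ↦ s(k)` is strictly decreasing on
positive integers; in particular it is injective there. -/
theorem stmt_7 (R : ℝ) (hR0 : 0 < R) (hR1 : R < 1)
    (s : ℕ → ℝ)
    (hs : ∀ k : ℕ, 1 ≤ k → s k =
      ((k : ℝ) * (k + 1) - (k : ℝ) * (k - 1) * R ^ (-(2 : ℤ) * k)) /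
      ((k : ℝ) * (k + 1) + (k : ℝ) * (k - 1) * R ^ (-(2 : ℤ) * k))) :
    (∀ k j : ℕ, 1 ≤ k → k < j → s j < s k) ∧
    Set.InjOn s {k : ℕ | 1 ≤ k} := by
  have key : ∀ k j : ℕ, 1 ≤ k → k < j → s j < s k := by
    intro k j hk hkj
    have hj : 1 ≤ j := le_of_lt (lt_of_le_of_lt hk hkj)
    rw [hs k hk, hs j hj]
    have hK1 : (1:ℝ) ≤ (k:ℝ) := by exact_mod_cast hk
    have hKJ : (k:ℝ) < (j:ℝ) := by exact_mod_cast hkj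
    have hrk : 0 < R ^ (-(2:ℤ)*k) := zpow_pos hR0 _
    have hrj : 0 < R ^ (-(2:ℤ)*j) := zpow_pos hR0 _
    have hrkj : R ^ (-(2:ℤ)*k) < R ^ (-(2:ℤ)*j) := by
      apply zpow_lt_zpow_right_of_lt_one₀ hR0 hR1
      have : (k:ℤ) < (j:ℤ) := by exact_mod_cast hkj
      omega
    have hdk : 0 < (k:ℝ)*((k:ℝ)+1) + (k:ℝ)*((k:ℝ)-1)*R^(-(2:ℤ)*k) := by
      nlinarith [mul_nonneg (mul_nonneg (by linarith : (0:ℝ) ≤ (k:ℝ)) (sub_nonneg.2 hK1)) hrk.le]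
    have hdj : 0 < (j:ℝ)*((j:ℝ)+1) + (j:ℝ)*((j:ℝ)-1)*R^(-(2:ℤ)*j) := by
      nlinarith [mul_nonneg (mul_nonneg (by linarith : (0:ℝ) ≤ (j:ℝ)) (by linarith : (0:ℝ) ≤ (j:ℝ)-1)) hrj.le]
    rw [div_lt_div_iff₀ hdj hdk]
    have hfac : ((k:ℝ)-1)*((j:ℝ)+1)*R^(-(2:ℤ)*k) < ((j:ℝ)-1)*((k:ℝ)+1)*R^(-(2:ℤ)*j) := by
      have h1 : ((k:ℝ)-1)*((j:ℝ)+1)*R^(-(2:ℤ)*k) ≤ ((k:ℝ)-1)*((j:ℝ)+1)*R^(-(2:ℤ)*j) :=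
        mul_le_mul_of_nonneg_left hrkj.le (by nlinarith)
      have h2 : ((k:ℝ)-1)*((j:ℝ)+1)*R^(-(2:ℤ)*j) < ((j:ℝ)-1)*((k:ℝ)+1)*R^(-(2:ℤ)*j) := by
        apply mul_lt_mul_of_pos_right _ hrj
        nlinarith
      exact lt_of_le_of_lt h1 h2
    nlinarith [mul_pos (mul_pos (by linarith : (0:ℝ) < (k:ℝ)) (by linarith : (0:ℝ) < (j:ℝ))) (sub_pos.2 hfac)]
  refine ⟨key, ?_⟩
  intro a ha b hb hab
  rcases lt_trichotomy a b with h | h | h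
  · exact absurd hab (ne_of_gt (key a b ha h))
  · exact h
  · exact absurd hab (ne_of_lt (key b a hb h))
end
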